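/- Let n be a positive even integer, N = n/2, and let b be the ℚ/ℤ-valued symmetric bilinear form on ℤ/Nℤ given by b(x̄,ȳ) = 2xy/n mod ℤ (the discriminant bilinear form of the rank-one lattice ⟨n/2⟩). Then there exists a group automorphism g of ℤ/Nℤ with b(g(x),g(y)) = −b(x,y) for all x,y (i.e. b ≅ −b) if and only if n = 2^ε·p₁^{α₁}···p_m^{α_m} with ε ∈ {1,2} and every p_i a prime with p_i ≡ 1 mod 4; equivalently, if and only if there exists u ∈ ℤ/Nℤ with u² = −1. -/

import Mathlib

open Matrix

/-- An integral lattice: a free `ℤ`-module `Fin rank → ℤ` equipped with a symmetric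
integer Gram matrix. -/
structure IntLattice where
  rank : ℕ
  gram : Matrix (Fin rank) (Fin rank) ℤ
  symm : gram.IsSymm

namespace IntLattice

/-- The bilinear form of the lattice. -/
def bilin (L : IntLattice) (x y : Fin L.rank → ℤ) : ℤ := x ⬝ᵥ (L.gram *ᵥ y)

lemma gram_symm_apply (L : IntLattice) (i j : Fin L.rank) : L.gram j i = L.gram i j :=
  congrFun (congrFun L.symm i) j

lemma bilin_comm (L : IntLattice) (x y : Fin L.rank → ℤ) :
    L.bilin x y = L.bilin y x := by
  simp only [bilin, dotProduct, mulVec, Finset.mul_sum]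
  rw [Finset.sum_comm]
  exact Finset.sum_congr rfl fun j _ => Finset.sum_congr rfl fun i _ => by
    rw [L.gram_symm_apply i j]; ring

/-- The lattice is even: all norms are even. -/
def IsEven (L : IntLattice) : Prop := ∀ x, 2 ∣ L.bilin x x

/-- The lattice is unimodular: the Gram matrix has determinant `±1`, equivalently the
map `L → Hom(L,ℤ)` is bijective. -/
def IsUnimodular (L : IntLattice) : Prop := IsUnit L.gram.det

/-- Positive definite lattice. -/
def PosDef (L : IntLattice) : Prop := ∀ x, x ≠ 0 → 0 < L.bilin x x

/-- The real quadratic form of the lattice has `p` positive and `q` negative squares. -/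
def HasSignature (L : IntLattice) (p q : ℕ) : Prop :=
  L.rank = p + q ∧
  ∃ Q : Matrix (Fin L.rank) (Fin L.rank) ℝ, IsUnit Q.det ∧
    Qᵀ * (L.gram.map ((↑) : ℤ → ℝ)) * Q =
      Matrix.diagonal (fun i : Fin L.rank => if (i : ℕ) < p then (1 : ℝ) else -1)

/-- The rational extension of the bilinear form. -/
def qbilin (L : IntLattice) (x y : Fin L.rank → ℚ) : ℚ :=
  x ⬝ᵥ ((L.gram.map ((↑) : ℤ → ℚ)) *ᵥ y)

end IntLattice

def castVec {N : ℕ} (x : Fin N → ℤ) : Fin N → ℚ := fun i => (x i : ℚ)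

def castHom (N : ℕ) : (Fin N → ℤ) →+ (Fin N → ℚ) where
  toFun := castVec
  map_zero' := by funext i; simp [castVec]
  map_add' a b := by funext i; simp [castVec]

namespace IntLattice

/-- The dual lattice `L∨ = {x ∈ L⊗ℚ : ⟨x,L⟩ ⊆ ℤ}`, as an additive subgroup of `ℚ^rank`. -/
def dualSub (L : IntLattice) : AddSubgroup (Fin L.rank → ℚ) where
  carrier := {x | ∀ y : Fin L.rank → ℤ, ∃ m : ℤ, L.qbilin x (castVec y) = m}
  add_mem' := by
    intro a b ha hb y
    obtain ⟨m, hm⟩ := ha y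
    obtain ⟨m', hm'⟩ := hb y
    refine ⟨m + m', ?_⟩
    simp only [qbilin, add_dotProduct] at *
    rw [hm, hm']; push_cast; ring
  zero_mem' := by
    intro y
    exact ⟨0, by simp [qbilin]⟩
  neg_mem' := by
    intro a ha y
    obtain ⟨m, hm⟩ := ha y
    refine ⟨-m, ?_⟩
    simp only [qbilin, neg_dotProduct] at *
    rw [hm]; push_cast; ring

/-- The image of `L` inside `L⊗ℚ`. -/
def latticeIn (L : IntLattice) : AddSubgroup (Fin L.rank → ℚ) := (castHom L.rank).range

/-- The discriminant group `A_L = L∨/L`. -/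
abbrev discGroup (L : IntLattice) : Type :=
  ↥(L.dualSub) ⧸ (L.latticeIn).addSubgroupOf L.dualSub

/-- Projection from the dual lattice to the discriminant group. -/
def dmk (L : IntLattice) : L.dualSub → L.discGroup := QuotientAddGroup.mk

/-- `g : A_M → A_N` carries the discriminant quadratic form `q_M` to `q_N`
(values in `ℚ/2ℤ`). -/
def QFormIso (M N : IntLattice) (g : M.discGroup ≃+ N.discGroup) : Prop :=
  ∀ x : M.dualSub, ∃ y : N.dualSub,
    N.dmk y = g (M.dmk x) ∧ ∃ m : ℤ, N.qbilin ↑y ↑y - M.qbilin ↑x ↑x = 2 * (m : ℚ)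

/-- `g : A_M → A_N` carries the discriminant quadratic form `q_M` to `-q_N`. -/
def QFormIsoNeg (M N : IntLattice) (g : M.discGroup ≃+ N.discGroup) : Prop :=
  ∀ x : M.dualSub, ∃ y : N.dualSub,
    N.dmk y = g (M.dmk x) ∧ ∃ m : ℤ, N.qbilin ↑y ↑y + M.qbilin ↑x ↑x = 2 * (m : ℚ)

/-- The integer matrix `F` defines an isometry `M → N` of lattices (`x ↦ F *ᵥ x`). -/
def MatIsometry (M N : IntLattice) (F : Matrix (Fin N.rank) (Fin M.rank) ℤ) : Prop :=
  (∃ F' : Matrix (Fin M.rank) (Fin N.rank) ℤ, F * F' = 1 ∧ F' * F = 1) ∧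
  Fᵀ * N.gram * F = M.gram

/-- The lattices `M` and `N` are isometric. -/
def Isometric (M N : IntLattice) : Prop := ∃ F, MatIsometry M N F

end IntLattice

/-- The rows of `B` form a `ℤ`-basis of the submodule `S`. -/
def IsBasisOf {N : ℕ} (S : Submodule ℤ (Fin N → ℤ)) {r : ℕ}
    (B : Matrix (Fin r) (Fin N) ℤ) : Prop :=
  (∀ i, B i ∈ S) ∧ ∀ x ∈ S, ∃! c : Fin r → ℤ, x = Matrix.vecMul c B

namespace IntLattice

/-- Gram matrix of the vectors given by the rows of `B`. -/
def gramOf (L : IntLattice) {r : ℕ} (B : Matrix (Fin r) (Fin L.rank) ℤ) :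
    Matrix (Fin r) (Fin r) ℤ := Matrix.of fun i j => L.bilin (B i) (B j)

lemma gramOf_isSymm (L : IntLattice) {r : ℕ} (B : Matrix (Fin r) (Fin L.rank) ℤ) :
    (L.gramOf B).IsSymm := by
  unfold Matrix.IsSymm
  ext i j
  simp only [transpose_apply, gramOf, Matrix.of_apply]
  exact L.bilin_comm _ _

/-- The sublattice of `L` spanned by the rows of `B`, as an abstract lattice. -/
def sub (L : IntLattice) {r : ℕ} (B : Matrix (Fin r) (Fin L.rank) ℤ) : IntLattice :=
  ⟨r, L.gramOf B, L.gramOf_isSymm B⟩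

/-- `M(1/2)`: the same module with the form divided by two. -/
abbrev halfL (M : IntLattice) : IntLattice :=
  ⟨M.rank, M.gram.map (fun z => z / 2), M.symm.map _⟩

end IntLattice

/-- Orthogonal direct sum of Gram matrices. -/
def dsumGram {m k : ℕ} (A : Matrix (Fin m) (Fin m) ℤ) (B : Matrix (Fin k) (Fin k) ℤ) :
    Matrix (Fin (m + k)) (Fin (m + k)) ℤ :=
  Matrix.of fun i j =>
    if hi : (i : ℕ) < m then
      if hj : (j : ℕ) < m then A ⟨i, hi⟩ ⟨j, hj⟩ else 0
    else
      if hj : (j : ℕ) < m then 0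
      else B ⟨(i : ℕ) - m, by omega⟩ ⟨(j : ℕ) - m, by omega⟩

lemma dsumGram_isSymm {m k : ℕ} {A : Matrix (Fin m) (Fin m) ℤ}
    {B : Matrix (Fin k) (Fin k) ℤ} (hA : A.IsSymm) (hB : B.IsSymm) :
    (dsumGram A B).IsSymm := by
  unfold Matrix.IsSymm
  ext i j
  simp only [transpose_apply, dsumGram, Matrix.of_apply]
  have hA' : ∀ a b, A b a = A a b := fun a b => congrFun (congrFun hA a) b
  have hB' : ∀ a b, B b a = B a b := fun a b => congrFun (congrFun hB a) b
  by_cases hi : (i : ℕ) < m <;> by_cases hj : (j : ℕ) < m <;> simp [hi, hj]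
  · exact hA' _ _
  · exact hB' _ _

/-- Orthogonal direct sum of lattices. -/
def IntLattice.dsum (M N : IntLattice) : IntLattice :=
  ⟨M.rank + N.rank, dsumGram M.gram N.gram, dsumGram_isSymm M.symm N.symm⟩

/-- The lattice with diagonal Gram matrix `diag d`. -/
def diagL {r : ℕ} (d : Fin r → ℤ) : IntLattice :=
  ⟨r, Matrix.diagonal d, Matrix.isSymm_diagonal d⟩

/-- The hyperbolic plane `U`. -/
def UL : IntLattice := ⟨2, Matrix.of !![0, 1; 1, 0], by decide⟩

/-- The negative definite even unimodular lattice `E₈` (negative of the `E₈` Cartan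
matrix; node `0` is the branch node with arms `1`, `2-3`, `4-5-6-7`). -/
def E8L : IntLattice :=
  ⟨8, !![-2,  1,  1,  0,  1,  0,  0,  0;
          1, -2,  0,  0,  0,  0,  0,  0;
          1,  0, -2,  1,  0,  0,  0,  0;
          0,  0,  1, -2,  0,  0,  0,  0;
          1,  0,  0,  0, -2,  1,  0,  0;
          0,  0,  0,  0,  1, -2,  1,  0;
          0,  0,  0,  0,  0,  1, -2,  1;
          0,  0,  0,  0,  0,  0,  1, -2], by decide⟩

/-- The rank-two lattice with Gram matrix `[[a,b],[b,d]]`. -/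
def sym2L (a b d : ℤ) : IntLattice :=
  ⟨2, !![a, b; b, d], by
    unfold Matrix.IsSymm
    ext i j
    fin_cases i <;> fin_cases j <;> simp⟩

/-- The `ε`-eigenspace of an involution `φ`. -/
def eigenSub {n : ℕ} (φ : (Fin n → ℤ) ≃ₗ[ℤ] (Fin n → ℤ)) (ε : ℤ) :
    Submodule ℤ (Fin n → ℤ) where
  carrier := {x | φ x = ε • x}
  add_mem' := by
    intro a b ha hb
    simp only [Set.mem_setOf_eq] at *
    rw [map_add, ha, hb, smul_add]
  zero_mem' := by simp
  smul_mem' := by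
    intro c x hx
    simp only [Set.mem_setOf_eq] at *
    rw [_root_.map_smul, hx, smul_comm]

/-- The orthogonal complement of a set of vectors in `L`. -/
def perpOfSet (L : IntLattice) (S : Set (Fin L.rank → ℤ)) :
    Submodule ℤ (Fin L.rank → ℤ) where
  carrier := {x | ∀ s ∈ S, L.bilin x s = 0}
  add_mem' := by
    intro a b ha hb s hs
    have ha' := ha s hs
    have hb' := hb s hs
    simp only [IntLattice.bilin] at ha' hb' ⊢
    rw [add_dotProduct, ha', hb', add_zero]
  zero_mem' := by
    intro s hs
    simp [IntLattice.bilin]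
  smul_mem' := by
    intro c x hx s hs
    have hx' := hx s hs
    simp only [IntLattice.bilin] at hx' ⊢
    rw [smul_dotProduct, hx', smul_zero]

/-- `P` is a primitive lattice vector. -/
def Primitive {n : ℕ} (P : Fin n → ℤ) : Prop :=
  P ≠ 0 ∧ ∀ (m : ℤ) (y : Fin n → ℤ), P = m • y → IsUnit m

/-- An integral polarized K3 involution `(L, φ, P′)`: `L` is an even unimodular lattice
of signature `(3,19)`, `φ` a form-preserving involution with hyperbolic fixed lattice,
and `P′` a polarization with `φ(P′) = -P′` and `(P′)² > 0`. -/
structure K3Inv where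
  L : IntLattice
  even : L.IsEven
  unimod : L.IsUnimodular
  sig : L.HasSignature 3 19
  φ : (Fin L.rank → ℤ) ≃ₗ[ℤ] (Fin L.rank → ℤ)
  φ_isom : ∀ x y, L.bilin (φ x) (φ y) = L.bilin x y
  φ_invol : ∀ x, φ (φ x) = x
  P' : Fin L.rank → ℤ
  φP' : φ P' = -P'
  P'pos : 0 < L.bilin P' P'
  fixed_hyp : ∃ (r : ℕ) (B : Matrix (Fin r) (Fin L.rank) ℤ),
    IsBasisOf (eigenSub φ 1) B ∧ (L.sub B).HasSignature 1 (r - 1)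

/-- Isomorphism of integral polarized K3 involutions. -/
def K3Iso (K K' : K3Inv) : Prop :=
  ∃ f : (Fin K.L.rank → ℤ) ≃ₗ[ℤ] (Fin K'.L.rank → ℤ),
    (∀ x y, K'.L.bilin (f x) (f y) = K.L.bilin x y) ∧
    f K.P' = K'.P' ∧
    ∀ x, K'.φ (f x) = f (K.φ x)

/-- `(L,φ,P′)` has genus invariants `(r, a, δ_φ; k, n, δ_P, δ_{φP})`. -/
def HasGenusInvariants (K : K3Inv) (r a δφ k : ℕ) (n : ℤ) (δP δφP : ℕ) : Prop :=
  (δφ = 0 ∨ δφ = 1) ∧ (δP = 0 ∨ δP = 1) ∧ (δφP = 0 ∨ δφP = 1) ∧ 1 ≤ k ∧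
  (∃ B : Matrix (Fin r) (Fin K.L.rank) ℤ,
      IsBasisOf (eigenSub K.φ 1) B ∧
      Nonempty ((K.L.sub B).discGroup ≃+ (Fin a → ZMod 2))) ∧
  (δφ = 0 ↔ ∀ x, 2 ∣ K.L.bilin x (K.φ x)) ∧
  ∃ P : Fin K.L.rank → ℤ, Primitive P ∧ K.P' = (k : ℤ) • P ∧ n = K.L.bilin P P ∧
    (δP = 0 ↔ ∀ y ∈ eigenSub K.φ (-1), 2 ∣ K.L.bilin P y) ∧
    (δφP = 0 ↔ ∀ x, 2 ∣ (K.L.bilin x (K.φ x) - K.L.bilin x P))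

/-- Two even lattices belong to the same genus: equal signatures over `ℝ` and
isomorphic discriminant quadratic forms. -/
def SameGenus (M N : IntLattice) : Prop :=
  (∃ p q, M.HasSignature p q ∧ N.HasSignature p q) ∧
  ∃ g : M.discGroup ≃+ N.discGroup, IntLattice.QFormIso M N g

/-- The `p`-primary part of an abelian group. -/
def primaryPart (p : ℕ) (G : Type*) [AddCommGroup G] : AddSubgroup G where
  carrier := {x | ∃ j : ℕ, p ^ j • x = 0}
  add_mem' := by
    rintro a b ⟨j, hj⟩ ⟨l, hl⟩
    refine ⟨j + l, ?_⟩
    rw [smul_add]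
    have h1 : p ^ (j + l) • a = 0 := by rw [pow_add, mul_comm, ← smul_smul, hj, smul_zero]
    have h2 : p ^ (j + l) • b = 0 := by rw [pow_add, ← smul_smul, hl, smul_zero]
    rw [h1, h2, add_zero]
  zero_mem' := ⟨0, smul_zero _⟩
  neg_mem' := by
    rintro a ⟨j, hj⟩
    exact ⟨j, by rw [smul_neg, hj, neg_zero]⟩

/-- A pair `(M, τ)`: an even lattice `M` in the genus of the reference lattice `R`
together with an isomorphism `τ : q_M → q_R` of discriminant quadratic forms. -/
structure QPairR (R : IntLattice) where
  M : IntLattice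
  even : M.IsEven
  genus : SameGenus M R
  τ : M.discGroup ≃+ R.discGroup
  hτ : IntLattice.QFormIso M R τ

/-- Equivalence of pairs: `(M,τ) ∼ (M̃,τ̃)` iff there is an isometry `f : M → M̃`
with `τ = τ̃ ∘ f̄`, where `f̄` is the induced map on discriminant groups. -/
def QPairREquiv {R : IntLattice} (p p' : QPairR R) : Prop :=
  ∃ F : Matrix (Fin p'.M.rank) (Fin p.M.rank) ℤ,
    IntLattice.MatIsometry p.M p'.M F ∧
    ∀ (x : p.M.dualSub) (y : p'.M.dualSub),
      (y : Fin p'.M.rank → ℚ) = (F.map ((↑) : ℤ → ℚ)) *ᵥ (x : Fin p.M.rank → ℚ) →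
      p.τ (p.M.dmk x) = p'.τ (p'.M.dmk y)

/-- `τ` is an isomorphism from the discriminant bilinear form of `M(1/2)` to the
standard form `b_{⟨-n/2⟩}` on `ℤ/(n/2)`, which sends `(x̄,ȳ)` to `-2xy/n mod ℤ`. -/
def BIsoStd (M : IntLattice) (n : ℤ) (τ : (M.halfL).discGroup ≃+ ZMod (n / 2).toNat) :
    Prop :=
  ∀ (x y : (M.halfL).dualSub) (α β : ℤ),
    ((α : ZMod (n / 2).toNat) = τ ((M.halfL).dmk x)) →
    ((β : ZMod (n / 2).toNat) = τ ((M.halfL).dmk y)) →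
    ∃ m : ℤ, (M.halfL).qbilin ↑x ↑y + (2 * α * β : ℚ) / (n : ℚ) = (m : ℚ)

/-- A pair `(M, τ)`: an even lattice `M` in the genus of the reference lattice `R`
together with an isomorphism `τ : b_{M(1/2)} → b_{⟨-n/2⟩}` of discriminant bilinear
forms. -/
structure BPairR (R : IntLattice) (n : ℤ) where
  M : IntLattice
  even : M.IsEven
  genus : SameGenus M R
  τ : (M.halfL).discGroup ≃+ ZMod (n / 2).toNat
  hτ : BIsoStd M n τ

/-- Equivalence of pairs `(M,τ) ∼ (M̃,τ̃)`: there is an isometry `f : M → M̃` with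
`τ = τ̃ ∘ f̄`. -/
def BPairREquiv {R : IntLattice} {n : ℤ} (p p' : BPairR R n) : Prop :=
  ∃ F : Matrix (Fin p'.M.rank) (Fin p.M.rank) ℤ,
    IntLattice.MatIsometry p.M p'.M F ∧
    ∀ (x : (p.M.halfL).dualSub) (y : (p'.M.halfL).dualSub),
      (y : Fin p'.M.rank → ℚ) = (F.map ((↑) : ℤ → ℚ)) *ᵥ (x : Fin p.M.rank → ℚ) →
      p.τ ((p.M.halfL).dmk x) = p'.τ ((p'.M.halfL).dmk y)

/-- `g` is an isomorphism `b_{⟨n/2⟩} → -b_{⟨n/2⟩}` of finite bilinear forms on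
`ℤ/(n/2)`, where `b_{⟨n/2⟩}(x̄,ȳ) = 2xy/n mod ℤ`. -/
def NegBIso (n : ℤ) (g : ZMod (n / 2).toNat ≃+ ZMod (n / 2).toNat) : Prop :=
  ∀ x y x' y' : ℤ,
    ((x' : ZMod (n / 2).toNat) = g ((x : ℤ) : ZMod (n / 2).toNat)) →
    ((y' : ZMod (n / 2).toNat) = g ((y : ℤ) : ZMod (n / 2).toNat)) →
    n ∣ 2 * (x' * y' + x * y)

/-- `g` preserves the restriction to the 2-primary part of the discriminant quadratic
form `q(x̄,ȳ) = x²/2 - y²/n mod 2ℤ` of `⟨2⟩⊕⟨-n⟩` on `ℤ/2 × ℤ/n`. -/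
def QPres2 (n : ℤ)
    (g : primaryPart 2 (ZMod 2 × ZMod n.toNat) ≃+ primaryPart 2 (ZMod 2 × ZMod n.toNat)) :
    Prop :=
  ∀ (x : primaryPart 2 (ZMod 2 × ZMod n.toNat)) (α β α' β' : ℤ),
    ((α : ZMod 2) = (x : ZMod 2 × ZMod n.toNat).1) →
    ((β : ZMod n.toNat) = (x : ZMod 2 × ZMod n.toNat).2) →
    ((α' : ZMod 2) = ((g x : primaryPart 2 (ZMod 2 × ZMod n.toNat)) : ZMod 2 × ZMod n.toNat).1) →
    ((β' : ZMod n.toNat) = ((g x : primaryPart 2 (ZMod 2 × ZMod n.toNat)) : ZMod 2 × ZMod n.toNat).2) →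
    (4 * n) ∣ (n * (α' ^ 2 - α ^ 2) - 2 * (β' ^ 2 - β ^ 2))

/-- `g` preserves the restriction to the 2-primary part of the discriminant bilinear
form `b(x̄,ȳ) = -2xy/n mod ℤ` of `⟨-n/2⟩` on `ℤ/(n/2)`. -/
def BPres2 (n : ℤ)
    (g : primaryPart 2 (ZMod (n / 2).toNat) ≃+ primaryPart 2 (ZMod (n / 2).toNat)) :
    Prop :=
  ∀ (x y : primaryPart 2 (ZMod (n / 2).toNat)) (α β α' β' : ℤ),
    ((α : ZMod (n / 2).toNat) = (x : ZMod (n / 2).toNat)) →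
    ((β : ZMod (n / 2).toNat) = (y : ZMod (n / 2).toNat)) →
    ((α' : ZMod (n / 2).toNat) = ((g x : primaryPart 2 (ZMod (n / 2).toNat)) : ZMod (n / 2).toNat)) →
    ((β' : ZMod (n / 2).toNat) = ((g y : primaryPart 2 (ZMod (n / 2).toNat)) : ZMod (n / 2).toNat)) →
    n ∣ 2 * (α' * β' - α * β)


/-!
Taking `g = (· * u)` shows that `b ≅ -b` as soon as `u ^ 2 = -1` in `ℤ/N`, and conversely
`b (g 1) (g 1) = -b 1 1` says that `g 1` is such a `u`. By the Chinese remainder theorem,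
`-1` is a square mod `N` iff it is one mod each prime power `p ^ k ∥ N`: for odd `p` this holds
iff `p ≡ 1 mod 4` (lift a root mod `p` by Hensel's lemma), and for `p = 2` iff `k ≤ 1`.
-/

-- Hensel step for `X ^ 2 + 1`: modulo `m`, `u` is inverted by `-u` and `2` by `a`, so
-- `v = u + a c u m ^ (j + 1)` kills the next digit of `u ^ 2 + 1 = m ^ (j + 1) c`.
lemma Int.exists_pow_succ_dvd_sq_add_one {m u : ℤ} {j : ℕ} (hm : IsCoprime 2 m)
    (hu : m ^ (j + 1) ∣ u ^ 2 + 1) : ∃ v : ℤ, m ^ (j + 2) ∣ v ^ 2 + 1 := by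
  obtain ⟨c, hc⟩ := hu
  obtain ⟨a, b, hab⟩ := hm
  refine ⟨u + a * c * u * m ^ (j + 1),
    m ^ j * c ^ 2 - c * b * u ^ 2 + m ^ j * a ^ 2 * c ^ 2 * u ^ 2, ?_⟩
  linear_combination (1 + m ^ (j + 1) * c) * hc + m ^ (j + 1) * c * u ^ 2 * hab

lemma ZMod.isSquare_neg_one_iff_exists_dvd {m : ℕ} :
    IsSquare (-1 : ZMod m) ↔ ∃ u : ℤ, (m : ℤ) ∣ u ^ 2 + 1 := by
  simp_rw [← ZMod.intCast_zmod_eq_zero_iff_dvd]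
  constructor
  · rintro ⟨r, hr⟩
    obtain ⟨u, rfl⟩ := ZMod.intCast_surjective r
    exact ⟨u, by push_cast; linear_combination -hr⟩
  · rintro ⟨u, hu⟩
    exact ⟨u, by push_cast at hu; linear_combination -hu⟩

lemma ZMod.isSquare_neg_one_pow {m : ℕ} (hm : Odd m) (h : IsSquare (-1 : ZMod m)) (k : ℕ) :
    IsSquare (-1 : ZMod (m ^ k)) := by
  have h2m : IsCoprime (2 : ℤ) m := by
    obtain ⟨t, rfl⟩ := hm
    exact ⟨-t, 1, by push_cast; ring⟩
  rw [ZMod.isSquare_neg_one_iff_exists_dvd] at h ⊢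
  push_cast
  cases k with
  | zero => exact ⟨0, by simp⟩
  | succ j =>
    induction j with
    | zero => simpa using h
    | succ j ih =>
      obtain ⟨u, hu⟩ := ih
      exact Int.exists_pow_succ_dvd_sq_add_one h2m hu

lemma ZMod.isSquare_neg_one_prime_pow {p k : ℕ} (hp : p.Prime) (hp4 : p % 4 ≠ 3)
    (h4 : ¬ 4 ∣ p ^ k) : IsSquare (-1 : ZMod (p ^ k)) := by
  obtain rfl | hp2 := eq_or_ne p 2
  · obtain rfl | rfl : k = 0 ∨ k = 1 := by
      by_contra! hk
      exact h4 (pow_dvd_pow 2 (by omega : 2 ≤ k))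
    all_goals decide
  · have : Fact p.Prime := ⟨hp⟩
    exact ZMod.isSquare_neg_one_pow (hp.odd_of_ne_two hp2)
      (ZMod.exists_sq_eq_neg_one_iff.mpr hp4) k

theorem ZMod.isSquare_neg_one_iff_not_four_dvd_and_forall_prime_dvd {N : ℕ} :
    IsSquare (-1 : ZMod N) ↔ ¬ 4 ∣ N ∧ ∀ p : ℕ, p.Prime → p ∣ N → p % 4 ≠ 3 := by
  constructor
  · intro hN
    refine ⟨fun h4 => ?_, fun p hp hpN => ?_⟩
    · have := ZMod.isSquare_neg_one_of_dvd h4 hN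
      revert this
      decide
    · have : Fact p.Prime := ⟨hp⟩
      exact ZMod.exists_sq_eq_neg_one_iff.mp (ZMod.isSquare_neg_one_of_dvd hpN hN)
  · induction N using Nat.recOnPosPrimePosCoprime with
    | zero => exact fun h => absurd (dvd_zero 4) h.1
    | one => exact fun _ => by decide
    | prime_pow p k hp hk =>
      exact fun ⟨h4, hP⟩ => ZMod.isSquare_neg_one_prime_pow hp
        (hP p hp (dvd_pow_self p hk.ne')) h4
    | coprime a b _ _ hab iha ihb =>
      rintro ⟨h4, hP⟩
      exact ZMod.isSquare_neg_one_mul hab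
        (iha ⟨fun h => h4 (h.mul_right b), fun p hp hpa => hP p hp (hpa.mul_right b)⟩)
        (ihb ⟨fun h => h4 (h.mul_left a), fun p hp hpb => hP p hp (hpb.mul_left a)⟩)

lemma exists_addEquiv_mul_map_eq_neg_iff {R : Type*} [CommRing R] :
    (∃ g : R ≃+ R, ∀ a b, g a * g b = -(a * b)) ↔ IsSquare (-1 : R) := by
  constructor
  · rintro ⟨g, hg⟩
    exact ⟨g 1, by simpa using (hg 1 1).symm⟩
  · rintro ⟨u, hu⟩
    have hunit : IsUnit u := IsUnit.of_mul_eq_one (-u) (by rw [mul_neg, ← hu, neg_neg])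
    refine ⟨DistribMulAction.toAddEquiv R hunit.unit, fun a b => ?_⟩
    simp only [DistribMulAction.toAddEquiv_apply, Units.smul_def, IsUnit.unit_spec, smul_eq_mul]
    linear_combination (a * b) * hu.symm

lemma negBIso_iff {n : ℤ} (hn : n = 2 * ((n / 2).toNat : ℤ))
    (g : ZMod (n / 2).toNat ≃+ ZMod (n / 2).toNat) :
    NegBIso n g ↔ ∀ a b, g a * g b = -(a * b) := by
  have hdvd : ∀ z : ℤ, n ∣ 2 * z ↔ (z : ZMod (n / 2).toNat) = 0 := fun z => by
    rw [ZMod.intCast_zmod_eq_zero_iff_dvd]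
    nth_rewrite 1 [hn]
    exact mul_dvd_mul_iff_left two_ne_zero
  simp_rw [NegBIso, hdvd]
  constructor
  · intro h a b
    obtain ⟨x, rfl⟩ := ZMod.intCast_surjective a
    obtain ⟨y, rfl⟩ := ZMod.intCast_surjective b
    obtain ⟨x', hx'⟩ := ZMod.intCast_surjective (g x)
    obtain ⟨y', hy'⟩ := ZMod.intCast_surjective (g y)
    have := h x y x' y' hx' hy'
    push_cast at this
    rw [← hx', ← hy']
    linear_combination this
  · intro h x y x' y' hx hy
    push_cast
    rw [hx, hy, h]
    ring

/-- For the discriminant bilinear form `b(x̄,ȳ) = 2xy/n` of `⟨n/2⟩`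
on `ℤ/(n/2)`: `b ≅ -b` iff `n = 2^ε p₁^{α₁} ⋯ p_m^{α_m}` with `ε ∈ {1,2}` and all
`p_i ≡ 1 mod 4`, equivalently iff `-1` is a square in `ℤ/(n/2)`. -/
theorem b_iso_neg_b_iff (n : ℤ) (hn : 0 < n) (heven : 2 ∣ n) :
    ((∃ g : ZMod (n / 2).toNat ≃+ ZMod (n / 2).toNat, NegBIso n g) ↔
      (¬ ((8 : ℤ) ∣ n) ∧ ∀ p : ℕ, p.Prime → p ≠ 2 → (p : ℤ) ∣ n → p % 4 = 1)) ∧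
    ((∃ g : ZMod (n / 2).toNat ≃+ ZMod (n / 2).toNat, NegBIso n g) ↔
      (∃ u : ZMod (n / 2).toNat, u * u = -1)) := by
  have hN : n = 2 * ((n / 2).toNat : ℤ) := by omega
  have key : (∃ g, NegBIso n g) ↔ IsSquare (-1 : ZMod (n / 2).toNat) := by
    simp_rw [negBIso_iff hN]
    exact exists_addEquiv_mul_map_eq_neg_iff
  refine ⟨key.trans ?_, key.trans ⟨fun ⟨u, hu⟩ => ⟨u, hu.symm⟩, fun ⟨u, hu⟩ => ⟨u, hu.symm⟩⟩⟩
  rw [ZMod.isSquare_neg_one_iff_not_four_dvd_and_forall_prime_dvd]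
  refine and_congr (by rw [← Int.natCast_dvd_natCast]; omega) (forall_congr' fun p => ?_)
  refine imp_congr_right fun hp => ?_
  obtain rfl | hp2 := eq_or_ne p 2
  · simp
  have hdvd : (p : ℤ) ∣ n ↔ p ∣ (n / 2).toNat := by
    nth_rewrite 1 [hN]
    rw [← (Nat.coprime_primes hp Nat.prime_two).mpr hp2 |>.dvd_mul_left]
    norm_cast
  have hmod4 : p % 4 ≠ 3 ↔ p % 4 = 1 := by
    have := hp.mod_two_eq_one_iff_ne_two.mpr hp2
    omega
  rw [hdvd, hmod4]
  exact ⟨fun h _ => h, fun h => h hp2⟩
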